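/- Church numerals are not unitary higher-order maps: for every natural number n ≠ 1, the Church numeral n̄ = λf.λx.fⁿ x does not realize the type (♯𝔹⇒♯𝔹)⇒(♯𝔹⇒♯𝔹); that is, n̄ ⊮ (♯𝔹⇒♯𝔹)⇒(♯𝔹⇒♯𝔹). -/

import Mathlib

namespace LinAlg

/-! ### Syntax: pure values, pure terms, term distributions -/

mutual
inductive Val : Type where
  | var : ℕ → Val
  | lam : ℕ → Distr → Val
  | star : Val
  | pair : Val → Val → Val
  | inl : Val → Val
  | inr : Val → Val
inductive Term : Type where
  | val : Val → Term
  | app : Term → Term → Term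
  | seq : Term → Distr → Term
  | letp : ℕ → ℕ → Term → Distr → Term
  | matc : Term → ℕ → Distr → ℕ → Distr → Term
inductive Distr : Type where
  | zero : Distr
  | single : Term → Distr
  | add : Distr → Distr → Distr
  | smul : ℂ → Distr → Distr
end

noncomputable instance : DecidableEq Val := fun _ _ => Classical.dec _
noncomputable instance : DecidableEq Term := fun _ _ => Classical.dec _
noncomputable instance : DecidableEq Distr := fun _ _ => Classical.dec _

/-! ### The shallow congruence ≡ on term distributions -/

inductive Cong : Distr → Distr → Prop where
  | addZero (d : Distr) : Cong (d.add .zero) d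
  | oneSmul (d : Distr) : Cong (Distr.smul 1 d) d
  | smulSmul (a b : ℂ) (d : Distr) : Cong (Distr.smul a (Distr.smul b d)) (Distr.smul (a * b) d)
  | addComm (d₁ d₂ : Distr) : Cong (d₁.add d₂) (d₂.add d₁)
  | addAssoc (d₁ d₂ d₃ : Distr) : Cong ((d₁.add d₂).add d₃) (d₁.add (d₂.add d₃))
  | smulDistrib (a b : ℂ) (d : Distr) : Cong (Distr.smul (a + b) d) ((Distr.smul a d).add (Distr.smul b d))
  | smulAdd (a : ℂ) (d₁ d₂ : Distr) : Cong (Distr.smul a (d₁.add d₂)) ((Distr.smul a d₁).add (Distr.smul a d₂))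
  | refl (d : Distr) : Cong d d
  | symm {d₁ d₂ : Distr} : Cong d₁ d₂ → Cong d₂ d₁
  | trans {d₁ d₂ d₃ : Distr} : Cong d₁ d₂ → Cong d₂ d₃ → Cong d₁ d₃
  | addCongr {d₁ d₁' d₂ d₂' : Distr} : Cong d₁ d₁' → Cong d₂ d₂' → Cong (d₁.add d₂) (d₁'.add d₂')
  | smulCongr (a : ℂ) {d d' : Distr} : Cong d d' → Cong (Distr.smul a d) (Distr.smul a d')

/-! ### Free variables -/

mutual
def fvV : Val → Finset ℕ
  | .var y => {y}
  | .lam y b => fvD b \ {y}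
  | .star => ∅
  | .pair v₁ v₂ => fvV v₁ ∪ fvV v₂
  | .inl v => fvV v
  | .inr v => fvV v
def fvT : Term → Finset ℕ
  | .val v => fvV v
  | .app s t => fvT s ∪ fvT t
  | .seq t s => fvT t ∪ fvD s
  | .letp y z t s => fvT t ∪ (fvD s \ {y, z})
  | .matc t y s₁ z s₂ => fvT t ∪ (fvD s₁ \ {y}) ∪ (fvD s₂ \ {z})
def fvD : Distr → Finset ℕ
  | .zero => ∅
  | .single t => fvT t
  | .add d₁ d₂ => fvD d₁ ∪ fvD d₂
  | .smul _ d => fvD d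
end

/-! ### Pure substitution -/

mutual
def substV (x : ℕ) (w : Val) : Val → Val
  | .var y => if y = x then w else .var y
  | .lam y b => if y = x then .lam y b else .lam y (substD x w b)
  | .star => .star
  | .pair v₁ v₂ => .pair (substV x w v₁) (substV x w v₂)
  | .inl v => .inl (substV x w v)
  | .inr v => .inr (substV x w v)
def substT (x : ℕ) (w : Val) : Term → Term
  | .val v => .val (substV x w v)
  | .app s t => .app (substT x w s) (substT x w t)
  | .seq t s => .seq (substT x w t) (substD x w s)
  | .letp y z t s =>
      .letp y z (substT x w t) (if y = x ∨ z = x then s else substD x w s)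
  | .matc t y s₁ z s₂ =>
      .matc (substT x w t) y (if y = x then s₁ else substD x w s₁)
        z (if z = x then s₂ else substD x w s₂)
def substD (x : ℕ) (w : Val) : Distr → Distr
  | .zero => .zero
  | .single t => .single (substT x w t)
  | .add d₁ d₂ => .add (substD x w d₁) (substD x w d₂)
  | .smul a d => .smul a (substD x w d)
end

/-! ### Linear extensions of the syntactic constructs -/

def appTD (s : Term) : Distr → Distr
  | .zero => .zero
  | .single t => .single (.app s t)
  | .add d₁ d₂ => .add (appTD s d₁) (appTD s d₂)
  | .smul a d => .smul a (appTD s d)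

def appDV : Distr → Val → Distr
  | .zero, _ => .zero
  | .single t, v => .single (.app t (.val v))
  | .add d₁ d₂, v => .add (appDV d₁ v) (appDV d₂ v)
  | .smul a d, v => .smul a (appDV d v)

def seqD : Distr → Distr → Distr
  | .zero, _ => .zero
  | .single t, s => .single (.seq t s)
  | .add d₁ d₂, s => .add (seqD d₁ s) (seqD d₂ s)
  | .smul a d, s => .smul a (seqD d s)

def letpD (x y : ℕ) : Distr → Distr → Distr
  | .zero, _ => .zero
  | .single t, s => .single (.letp x y t s)
  | .add d₁ d₂, s => .add (letpD x y d₁ s) (letpD x y d₂ s)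
  | .smul a d, s => .smul a (letpD x y d s)

def matcD : Distr → ℕ → Distr → ℕ → Distr → Distr
  | .zero, _, _, _, _ => .zero
  | .single t, y, s₁, z, s₂ => .single (.matc t y s₁ z s₂)
  | .add d₁ d₂, y, s₁, z, s₂ => .add (matcD d₁ y s₁ z s₂) (matcD d₂ y s₁ z s₂)
  | .smul a d, y, s₁, z, s₂ => .smul a (matcD d y s₁ z s₂)

/-- Bilinear application of distributions:  (Σᵢ αᵢ·tᵢ)(Σⱼ βⱼ·sⱼ) = Σᵢⱼ αᵢβⱼ·(tᵢ sⱼ). -/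
def appD : Distr → Distr → Distr
  | .zero, _ => .zero
  | .single t, w => appTD t w
  | .add d₁ d₂, w => .add (appD d₁ w) (appD d₂ w)
  | .smul a d, w => .smul a (appD d w)

/-- Bilinear substitution  d⟨x := w⃗⟩ = Σⱼ βⱼ · d[x := wⱼ]  (recursion on the value
distribution w⃗; non-value summands are junk and are sent to 0⃗). -/
def bsubst (x : ℕ) (d : Distr) : Distr → Distr
  | .zero => .zero
  | .single (.val w) => substD x w d
  | .single _ => .zero
  | .add w₁ w₂ => .add (bsubst x d w₁) (bsubst x d w₂)
  | .smul a w => .smul a (bsubst x d w)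

/-! ### Evaluation -/

inductive Atom : Term → Distr → Prop where
  | beta (x : ℕ) (b : Distr) (v : Val) :
      Atom (.app (.val (.lam x b)) (.val v)) (substD x v b)
  | seqStar (s : Distr) : Atom (.seq (.val .star) s) s
  | letPair (x y : ℕ) (v w : Val) (s : Distr) :
      Atom (.letp x y (.val (.pair v w)) s) (substD y w (substD x v s))
  | matchInl (v : Val) (y : ℕ) (s₁ : Distr) (z : ℕ) (s₂ : Distr) :
      Atom (.matc (.val (.inl v)) y s₁ z s₂) (substD y v s₁)
  | matchInr (v : Val) (y : ℕ) (s₁ : Distr) (z : ℕ) (s₂ : Distr) :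
      Atom (.matc (.val (.inr v)) y s₁ z s₂) (substD z v s₂)
  | appR (s : Term) {t : Term} {d : Distr} : Atom t d → Atom (.app s t) (appTD s d)
  | appL (v : Val) {t : Term} {d : Distr} : Atom t d → Atom (.app t (.val v)) (appDV d v)
  | seqC (s : Distr) {t : Term} {d : Distr} : Atom t d → Atom (.seq t s) (seqD d s)
  | letC (x y : ℕ) (s : Distr) {t : Term} {d : Distr} :
      Atom t d → Atom (.letp x y t s) (letpD x y d s)
  | matcC (y : ℕ) (s₁ : Distr) (z : ℕ) (s₂ : Distr) {t : Term} {d : Distr} :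
      Atom t d → Atom (.matc t y s₁ z s₂) (matcD d y s₁ z s₂)

/-- One-step evaluation:  t⃗ ≻ t⃗′. -/
def Step (d d' : Distr) : Prop :=
  ∃ (a : ℂ) (s : Term) (s' r : Distr),
    Cong d (Distr.add (.smul a (.single s)) r) ∧
    Cong d' (Distr.add (.smul a s') r) ∧ Atom s s'

/-- Evaluation  t⃗ ≻≻ t⃗′:  reflexive-transitive closure of one-step evaluation. -/
def Eval : Distr → Distr → Prop := Relation.ReflTransGen Step

/-! ### Value distributions, inner product, norm -/

def IsValT : Term → Prop
  | .val _ => True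
  | _ => False

def IsValD : Distr → Prop
  | .zero => True
  | .single t => IsValT t
  | .add d₁ d₂ => IsValD d₁ ∧ IsValD d₂
  | .smul _ d => IsValD d

/-- The set of closed value distributions. -/
def ClosedValD : Set Distr := {d | IsValD d ∧ fvD d = ∅}

/-- Total coefficient of the pure term `t` in the distribution `d`. -/
noncomputable def coeff : Distr → Term → ℂ
  | .zero, _ => 0
  | .single s, t => if s = t then 1 else 0
  | .add d₁ d₂, t => coeff d₁ t + coeff d₂ t
  | .smul a d, t => a * coeff d t

/-- The domain of a distribution (all pure terms occurring in it, even with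
coefficient 0). -/
noncomputable def domD : Distr → Finset Term
  | .zero => ∅
  | .single t => {t}
  | .add d₁ d₂ => domD d₁ ∪ domD d₂
  | .smul _ d => domD d

/-- The inner product ⟨v⃗|w⃗⟩ on value distributions. -/
noncomputable def innerD (v w : Distr) : ℂ :=
  ∑ t ∈ domD v, (starRingEnd ℂ) (coeff v t) * coeff w t

/-- The pseudo-ℓ²-norm ‖v⃗‖. -/
noncomputable def normD (v : Distr) : ℝ := Real.sqrt (innerD v v).re

/-- The unit sphere S of closed value distributions of norm 1. -/
def Sphere : Set Distr := {d | d ∈ ClosedValD ∧ normD d = 1}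

/-- Span(X): weak linear combinations of elements of X (taken modulo ≡). -/
inductive Span (X : Set Distr) : Distr → Prop where
  | mem {d : Distr} : d ∈ X → Span X d
  | zero : Span X .zero
  | add {d₁ d₂ : Distr} : Span X d₁ → Span X d₂ → Span X (d₁.add d₂)
  | smul (a : ℂ) {d : Distr} : Span X d → Span X (Distr.smul a d)
  | congr {d d' : Distr} : Span X d → Cong d d' → Span X d'

/-! ### Realizability: unitary types -/

/-- t⃗ ⊩ A :  t⃗ evaluates to some vector of ⟦A⟧. -/
def Realizes (A : Set Distr) (t : Distr) : Prop := ∃ v ∈ A, Eval t v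

/-- |A| : the set of (closed) realizers of A. -/
def realizersOf (A : Set Distr) : Set Distr := {t | fvD t = ∅ ∧ Realizes A t}

/-! ### Type constructors -/

def UnitT : Set Distr := {Distr.single (.val .star)}

/-- ♭A : the basis of A. -/
def flatT (X : Set Distr) : Set Distr :=
  {e | ∃ d ∈ X, ∃ v : Val, (Term.val v) ∈ domD d ∧ e = Distr.single (.val v)}

/-- ♯A : the unitary span of A. -/
def sharpT (X : Set Distr) : Set Distr := {d | Span X d ∧ d ∈ Sphere}

/-- Linear extension of a value constructor. -/
def mapVD (f : Val → Val) : Distr → Distr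
  | .zero => .zero
  | .single (.val v) => .single (.val (f v))
  | .single t => .single t
  | .add d₁ d₂ => .add (mapVD f d₁) (mapVD f d₂)
  | .smul a d => .smul a (mapVD f d)

def inlD : Distr → Distr := mapVD Val.inl
def inrD : Distr → Distr := mapVD Val.inr

/-- Bilinear extension of pairing. -/
def pairD : Distr → Distr → Distr
  | .zero, _ => .zero
  | .single (.val v), w => mapVD (Val.pair v) w
  | .single t, _ => .single t
  | .add d₁ d₂, w => .add (pairD d₁ w) (pairD d₂ w)
  | .smul a d, w => .smul a (pairD d w)

/-- A + B (simple sum). -/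
def plusT (A B : Set Distr) : Set Distr :=
  {d | (∃ v ∈ A, d = inlD v) ∨ (∃ w ∈ B, d = inrD w)}

/-- A × B (simple product). -/
def timesT (A B : Set Distr) : Set Distr :=
  {d | ∃ v ∈ A, ∃ w ∈ B, d = pairD v w}

/-- A → B (pure arrow). -/
def arrowT (A B : Set Distr) : Set Distr :=
  {d | ∃ (x : ℕ) (b : Distr), d = Distr.single (.val (.lam x b)) ∧ fvD d = ∅ ∧
      ∀ v ∈ A, Realizes B (bsubst x b v)}

/-- Σᵢ αᵢ · λx.t⃗ᵢ  ↦  Σᵢ αᵢ · t⃗ᵢ  (strips the λx in front of each summand). -/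
def stripLam (x : ℕ) : Distr → Distr
  | .zero => .zero
  | .single (.val (.lam y b)) => if y = x then b else .single (.val (.lam y b))
  | .single t => .single t
  | .add d₁ d₂ => .add (stripLam x d₁) (stripLam x d₂)
  | .smul a d => .smul a (stripLam x d)

/-- A ⇒ B (unitary arrow). -/
def uarrowT (A B : Set Distr) : Set Distr :=
  {d | d ∈ Sphere ∧ ∃ x : ℕ,
      (∀ t ∈ domD d, ∃ b : Distr, t = Term.val (.lam x b)) ∧
      ∀ v ∈ A, Realizes B (bsubst x (stripLam x d) v)}

/-! ### Booleans -/

def ttD : Distr := .single (.val (.inl .star))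
def ffD : Distr := .single (.val (.inr .star))

/-- 𝔹 = 𝕌 + 𝕌. -/
def BoolT : Set Distr := plusT UnitT UnitT

/-- ♯𝔹, the type of unitary Booleans. -/
def sharpBool : Set Distr := sharpT BoolT

/-- Boolean projection π : Span({tt,ff}) → ℂ². -/
noncomputable def piB (d : Distr) : ℂ × ℂ :=
  (coeff d (.val (.inl .star)), coeff d (.val (.inr .star)))

/-- t⃗ represents the operator F : ℂ² → ℂ². -/
def Represents (td : Distr) (F : ℂ × ℂ → ℂ × ℂ) : Prop :=
  ∀ v, Span BoolT v → ∃ w, Span BoolT w ∧ Eval (appD td v) w ∧ piB w = F (piB v)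

/-- Hermitian inner product on ℂ². -/
def hinner (u v : ℂ × ℂ) : ℂ :=
  (starRingEnd ℂ) u.1 * v.1 + (starRingEnd ℂ) u.2 * v.2

/-- A unitary operator on ℂ². -/
def IsUnitaryOp (F : ℂ × ℂ → ℂ × ℂ) : Prop :=
  ∀ u v : ℂ × ℂ, hinner (F u) (F v) = hinner u v

/-! ### Typing contexts, substitutions, judgments -/

abbrev Ctx := List (ℕ × Set Distr)
abbrev Subst := List (ℕ × Distr)

/-- Applying a substitution, one bilinear substitution at a time. -/
def applySub : Distr → Subst → Distr
  | d, [] => d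
  | d, (x, w) :: σ => applySub (bsubst x d w) σ

/-- σ ∈ ⟦Γ⟧. -/
def SubMem (σ : Subst) (Γ : Ctx) : Prop :=
  List.Forall₂ (fun p q => p.1 = q.1 ∧ p.2 ∈ q.2) σ Γ

def ctxDom (Γ : Ctx) : Set ℕ := {x | ∃ A, (x, A) ∈ Γ}

/-- dom♯(Γ): the variables of Γ whose type is not a pure-value type. -/
def ctxDomSharp (Γ : Ctx) : Set ℕ := {x | ∃ A, (x, A) ∈ Γ ∧ flatT A ≠ A}

/-- All the types of the context are unitary types (subsets of the sphere). -/
def CtxUnitary (Γ : Ctx) : Prop := ∀ p ∈ Γ, p.2 ⊆ Sphere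

/-- Validity of the typing judgment  Γ ⊢ t⃗ : A. -/
def ValidJ (Γ : Ctx) (t : Distr) (A : Set Distr) : Prop :=
  ctxDomSharp Γ ⊆ (fvD t : Set ℕ) ∧ (fvD t : Set ℕ) ⊆ ctxDom Γ ∧
  ∀ σ : Subst, SubMem σ Γ → Realizes A (applySub t σ)

/-- Validity of the orthogonality judgment  Γ | Δ₁ ⊢ t⃗₁ ⊥ Δ₂ ⊢ t⃗₂ : A. -/
def OrthoJ (Γ Δ₁ Δ₂ : Ctx) (t₁ t₂ : Distr) (A : Set Distr) : Prop :=
  ValidJ (Γ ++ Δ₁) t₁ A ∧ ValidJ (Γ ++ Δ₂) t₂ A ∧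
  ∀ σ σ₁ σ₂ : Subst, SubMem σ Γ → SubMem σ₁ Δ₁ → SubMem σ₂ Δ₂ →
    ∀ v₁ v₂ : Distr, v₁ ∈ ClosedValD → v₂ ∈ ClosedValD →
      Eval (applySub t₁ (σ ++ σ₁)) v₁ → Eval (applySub t₂ (σ ++ σ₂)) v₂ →
      innerD v₁ v₂ = 0

end LinAlg

namespace LinAlg

/-- fⁿ x, with f the variable 0 and x the variable 1. -/
def iterApp : ℕ → Term
  | 0 => .val (.var 1)
  | n + 1 => .app (.val (.var 0)) (iterApp n)

/-- The Church numeral n̄ = λf.λx.fⁿ x. -/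
def church (n : ℕ) : Distr :=
  .single (.val (.lam 0 (.single (.val (.lam 1 (.single (iterApp n)))))))
/-!
The NOT gate is the superposition `(w₊ + w₋)/√2` of the two nilpotent gates `w₊ = √2·|tt⟩⟨ff|`
and `w₋ = √2·|ff⟩⟨tt|`, each a λ-abstraction over a `match`; it is a unitary map in `♯𝔹 ⇒ ♯𝔹`.
Substitution being bilinear, `n̄` sends it to `(λx.w₊ⁿ x + λx.w₋ⁿ x)/√2`. For `n = 0` both
summands are the identity, giving a vector of norm `√2`. For `n ≥ 2` both powers vanish, and
applying the result to `tt` cannot reach a unit Boolean: every term reachable from `w₊ⁿ tt` and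
`w₋ⁿ tt` is a gate circuit, and the linear meaning in `ℂ²` of a superposition of circuits is
preserved by evaluation.
-/

abbrev ttT : Term := .val (.inl .star)
abbrev ffT : Term := .val (.inr .star)

noncomputable abbrev boolTerms : Finset Term := {ttT, ffT}

def IsBoolD (d : Distr) : Prop := domD d ⊆ boolTerms

theorem Cong.domD_eq {d e : Distr} (h : Cong d e) : domD d = domD e := by
  induction h with
  | addComm => exact Finset.union_comm _ _
  | addAssoc => exact Finset.union_assoc _ _ _
  | symm _ ih => exact ih.symm
  | trans _ _ ih₁ ih₂ => exact ih₁.trans ih₂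
  | addCongr _ _ ih₁ ih₂ => simp only [domD, ih₁, ih₂]
  | smulCongr _ _ ih => exact ih
  | _ => simp [domD]

section Evaluation

theorem Atom.step {s : Term} {d : Distr} (h : Atom s d) : Step (.single s) d :=
  have padded (e : Distr) : Cong e (.add (.smul 1 e) .zero) :=
    .trans (.symm (.addZero e)) (.addCongr (.symm (.oneSmul e)) (.refl _))
  ⟨1, s, d, .zero, padded _, padded _, h⟩

theorem Step.smul (a : ℂ) {d d' : Distr} (h : Step d d') : Step (.smul a d) (.smul a d') := by
  obtain ⟨α, s, s', r, h₁, h₂, hat⟩ := h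
  have distrib (e : Distr) :
      Cong (.smul a (.add (.smul α e) r)) (.add (.smul (a * α) e) (.smul a r)) :=
    .trans (.smulAdd a _ _) (.addCongr (.smulSmul a α _) (.refl _))
  exact ⟨a * α, s, s', .smul a r, (Cong.smulCongr a h₁).trans (distrib _),
    (Cong.smulCongr a h₂).trans (distrib _), hat⟩

theorem Step.add_left {d d' : Distr} (e : Distr) (h : Step d d') :
    Step (.add d e) (.add d' e) := by
  obtain ⟨α, s, s', r, h₁, h₂, hat⟩ := h
  exact ⟨α, s, s', .add r e, (Cong.addCongr h₁ (.refl e)).trans (.addAssoc _ _ _),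
    (Cong.addCongr h₂ (.refl e)).trans (.addAssoc _ _ _), hat⟩

theorem Step.add_right (d : Distr) {e e' : Distr} (h : Step e e') :
    Step (.add d e) (.add d e') := by
  obtain ⟨α, s, s', r, h₁, h₂, hat⟩ := h
  exact ⟨α, s, s', .add r d, (Cong.addComm d e).trans ((Cong.addCongr h₁ (.refl d)).trans
    (.addAssoc _ _ _)), (Cong.addComm d e').trans ((Cong.addCongr h₂ (.refl d)).trans
    (.addAssoc _ _ _)), hat⟩

theorem Eval.smul (a : ℂ) {d d' : Distr} (h : Eval d d') : Eval (.smul a d) (.smul a d') :=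
  Relation.ReflTransGen.lift (Distr.smul a) (fun _ _ => Step.smul a) _ _ h

theorem Eval.add {d d' e e' : Distr} (hd : Eval d d') (he : Eval e e') :
    Eval (.add d e) (.add d' e') :=
  (Relation.ReflTransGen.lift (Distr.add · e) (fun _ _ => Step.add_left e) _ _ hd).trans
    (Relation.ReflTransGen.lift (Distr.add d') (fun _ _ => Step.add_right d') _ _ he)

theorem not_atom_val (v : Val) (d : Distr) : ¬ Atom (.val v) d := nofun

theorem eval_eq_of_forall_val {d e : Distr} (hd : ∀ t ∈ domD d, ∃ v, t = .val v)
    (h : Eval d e) : e = d := by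
  rcases h.cases_head with rfl | ⟨_, ⟨_, s, _, _, hs, _, hat⟩, _⟩
  · rfl
  · obtain ⟨v, rfl⟩ := hd s (by simp [hs.domD_eq, domD])
    exact absurd hat (not_atom_val v _)

theorem realizes_iff_mem {A : Set Distr} {d : Distr} (hd : ∀ t ∈ domD d, ∃ v, t = .val v) :
    Realizes A d ↔ d ∈ A :=
  ⟨fun ⟨_, hv, h⟩ => eval_eq_of_forall_val hd h ▸ hv, fun h => ⟨d, h, .refl⟩⟩

theorem realizes_of_mem_uarrowT {A B : Set Distr} {d : Distr} (h : d ∈ uarrowT A B) {x : ℕ}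
    (hx : ∃ b, .val (.lam x b) ∈ domD d) : ∀ v ∈ A, Realizes B (bsubst x (stripLam x d) v) := by
  obtain ⟨_, y, hlam, hreal⟩ := h
  obtain ⟨b, hb⟩ := hx
  obtain ⟨_, hxy⟩ := hlam _ hb
  cases hxy
  exact hreal

end Evaluation

section Booleans

@[simp] theorem isBoolD_zero : IsBoolD .zero := Finset.empty_subset _

@[simp] theorem isBoolD_single_iff {t : Term} : IsBoolD (.single t) ↔ t = ttT ∨ t = ffT := by
  simp [IsBoolD, domD]

@[simp] theorem isBoolD_add_iff {d e : Distr} : IsBoolD (.add d e) ↔ IsBoolD d ∧ IsBoolD e :=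
  Finset.union_subset_iff

@[simp] theorem isBoolD_smul_iff {a : ℂ} {d : Distr} : IsBoolD (.smul a d) ↔ IsBoolD d := Iff.rfl

theorem coeff_eq_zero_of_not_mem_domD {t : Term} : ∀ {d : Distr}, t ∉ domD d → coeff d t = 0
  | .zero, _ => rfl
  | .single _, h => by simp_all [coeff, domD, eq_comm]
  | .add _ _, h => by
      simp only [domD, Finset.mem_union, not_or] at h
      simp [coeff, coeff_eq_zero_of_not_mem_domD h.1, coeff_eq_zero_of_not_mem_domD h.2]
  | .smul _ d, h => by simp [coeff, coeff_eq_zero_of_not_mem_domD (d := d) h]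

namespace IsBoolD

theorem substD_eq (x : ℕ) (w : Val) : ∀ {d : Distr}, IsBoolD d → substD x w d = d
  | .zero, _ => rfl
  | .single _, h => by
      rcases isBoolD_single_iff.1 h with rfl | rfl <;> simp [substD, substT, substV]
  | .add _ _, h => by simp [substD, substD_eq x w (isBoolD_add_iff.1 h).1,
      substD_eq x w (isBoolD_add_iff.1 h).2]
  | .smul _ _, h => by simp [substD, substD_eq x w (isBoolD_smul_iff.1 h)]

theorem span : ∀ {d : Distr}, IsBoolD d → Span BoolT d
  | .zero, _ => .zero
  | .single _, h => by
      rcases isBoolD_single_iff.1 h with rfl | rfl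
      · exact .mem (Or.inl ⟨_, rfl, rfl⟩)
      · exact .mem (Or.inr ⟨_, rfl, rfl⟩)
  | .add _ _, h => .add (span (isBoolD_add_iff.1 h).1) (span (isBoolD_add_iff.1 h).2)
  | .smul a d, h => .smul a (span (d := d) h)

theorem mem_closedValD : ∀ {d : Distr}, IsBoolD d → d ∈ ClosedValD
  | .zero, _ => ⟨trivial, rfl⟩
  | .single _, h => by rcases isBoolD_single_iff.1 h with rfl | rfl <;> exact ⟨trivial, rfl⟩
  | .add _ _, h => by
      obtain ⟨hv₁, hf₁⟩ := mem_closedValD (isBoolD_add_iff.1 h).1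
      obtain ⟨hv₂, hf₂⟩ := mem_closedValD (isBoolD_add_iff.1 h).2
      exact ⟨⟨hv₁, hv₂⟩, by simp [fvD, hf₁, hf₂]⟩
  | .smul _ d, h => mem_closedValD (d := d) h

theorem innerD_self {d : Distr} (h : IsBoolD d) :
    innerD d d = Complex.normSq (piB d).1 + Complex.normSq (piB d).2 := by
  rw [innerD, Finset.sum_subset h (fun t _ ht => by simp [coeff_eq_zero_of_not_mem_domD ht]),
    Finset.sum_pair (by simp)]
  simp [piB, Complex.normSq_eq_conj_mul_self]

theorem normD_eq_one_iff {d : Distr} (h : IsBoolD d) :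
    normD d = 1 ↔ Complex.normSq (piB d).1 + Complex.normSq (piB d).2 = 1 := by
  rw [normD, h.innerD_self, ← Complex.ofReal_add, Complex.ofReal_re, Real.sqrt_eq_one]

end IsBoolD

theorem Span.isBoolD {d : Distr} (h : Span BoolT d) : IsBoolD d := by
  induction h with
  | mem hd =>
      rcases hd with ⟨_, rfl, rfl⟩ | ⟨_, rfl, rfl⟩ <;> simp [IsBoolD, inlD, inrD, mapVD, domD]
  | zero => exact isBoolD_zero
  | add _ _ ih₁ ih₂ => exact isBoolD_add_iff.2 ⟨ih₁, ih₂⟩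
  | smul _ _ ih => exact ih
  | congr _ hc ih => rwa [IsBoolD, ← hc.domD_eq]

theorem mem_sharpBool_iff {d : Distr} :
    d ∈ sharpBool ↔ IsBoolD d ∧ Complex.normSq (piB d).1 + Complex.normSq (piB d).2 = 1 :=
  ⟨fun ⟨hs, _, hn⟩ => ⟨hs.isBoolD, (hs.isBoolD.normD_eq_one_iff).1 hn⟩,
    fun ⟨hb, hn⟩ => ⟨hb.span, hb.mem_closedValD, hb.normD_eq_one_iff.2 hn⟩⟩

theorem ttD_mem_sharpBool : ttD ∈ sharpBool :=
  mem_sharpBool_iff.2 ⟨by simp [ttD], by simp [piB, ttD, coeff]⟩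

end Booleans

section Gates

noncomputable def gateMap (a b : Distr) : Module.End ℂ (ℂ × ℂ) :=
  (LinearMap.fst ℂ ℂ ℂ).smulRight (piB a) + (LinearMap.snd ℂ ℂ ℂ).smulRight (piB b)

@[simp] theorem gateMap_apply (a b : Distr) (p : ℂ × ℂ) :
    gateMap a b p = p.1 • piB a + p.2 • piB b := rfl

def gate (a b : Distr) : Val := .lam 2 (.single (.matc (.val (.var 2)) 3 a 4 b))

/-- Meaningful on `Circuit`s only: the last pattern does not check that the `match` is on the bound
variable, and every other term is sent to `0`. -/
noncomputable def denote : Term → ℂ × ℂ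
  | .val (.inl .star) => (1, 0)
  | .val (.inr .star) => (0, 1)
  | .matc (.val (.inl .star)) _ a _ _ => piB a
  | .matc (.val (.inr .star)) _ _ _ b => piB b
  | .app (.val (.lam _ (.single (.matc _ _ a _ b)))) t => gateMap a b (denote t)
  | _ => 0

noncomputable def denoteD : Distr → ℂ × ℂ
  | .zero => 0
  | .single t => denote t
  | .add d e => denoteD d + denoteD e
  | .smul a d => a • denoteD d

theorem Cong.denoteD_eq {d e : Distr} (h : Cong d e) : denoteD d = denoteD e := by
  induction h with
  | symm _ ih => exact ih.symm
  | trans _ _ ih₁ ih₂ => exact ih₁.trans ih₂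
  | _ => simp_all [denoteD, add_smul, smul_add, smul_smul, add_comm, add_assoc]

theorem IsBoolD.denoteD_eq : ∀ {d : Distr}, IsBoolD d → denoteD d = piB d
  | .zero, _ => by simp [denoteD, piB, coeff]; rfl
  | .single _, h => by
      rcases isBoolD_single_iff.1 h with rfl | rfl <;> simp [denoteD, denote, piB, coeff]
  | .add _ _, h => by
      simp [denoteD, IsBoolD.denoteD_eq (isBoolD_add_iff.1 h).1,
        IsBoolD.denoteD_eq (isBoolD_add_iff.1 h).2, piB, coeff]
  | .smul _ d, h => by simp [denoteD, IsBoolD.denoteD_eq (d := d) h, piB, coeff]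

theorem denote_matc {u : Val} (hu : .val u ∈ boolTerms) (x y : ℕ) (a b : Distr) :
    denote (.matc (.val u) x a y b) = gateMap a b (denote (.val u)) := by
  simp only [Finset.mem_insert, Finset.mem_singleton, Term.val.injEq] at hu
  rcases hu with rfl | rfl <;> simp [denote]

theorem denote_app_gate (a b : Distr) (t : Term) :
    denote (.app (.val (gate a b)) t) = gateMap a b (denote t) := by
  simp [gate, denote]

theorem denoteD_appTD_gate (a b : Distr) :
    ∀ d : Distr, denoteD (appTD (.val (gate a b)) d) = gateMap a b (denoteD d)
  | .zero => by simp [appTD, denoteD]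
  | .single t => denote_app_gate a b t
  | .add d e => by simp only [appTD, denoteD, denoteD_appTD_gate a b d,
      denoteD_appTD_gate a b e, map_add]
  | .smul c d => by simp only [appTD, denoteD, denoteD_appTD_gate a b d, map_smul]

theorem mem_domD_appTD {s t : Term} : ∀ {d : Distr}, t ∈ domD (appTD s d) →
    ∃ u ∈ domD d, t = .app s u
  | .zero, h => by simp [appTD, domD] at h
  | .single _, h => by simpa [appTD, domD] using h
  | .add d e, h => by
      simp only [appTD, domD, Finset.mem_union] at h
      rcases h with h | h
      · obtain ⟨u, hu, rfl⟩ := mem_domD_appTD h; exact ⟨u, by simp [domD, hu], rfl⟩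
      · obtain ⟨u, hu, rfl⟩ := mem_domD_appTD h; exact ⟨u, by simp [domD, hu], rfl⟩
  | .smul _ d, h => mem_domD_appTD (d := d) h

inductive Circuit : Term → Prop
  | bool {t : Term} : t ∈ boolTerms → Circuit t
  | matc {u : Val} {x y : ℕ} {a b : Distr} :
      .val u ∈ boolTerms → IsBoolD a → IsBoolD b → Circuit (.matc (.val u) x a y b)
  | app {a b : Distr} {t : Term} :
      IsBoolD a → IsBoolD b → Circuit t → Circuit (.app (.val (gate a b)) t)

def IsCircuitD (d : Distr) : Prop := ∀ t ∈ domD d, Circuit t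

theorem Circuit.atom {s : Term} (hs : Circuit s) {d : Distr} (h : Atom s d) :
    IsCircuitD d ∧ denoteD d = denote s := by
  induction hs generalizing d with
  | bool hs =>
      simp only [Finset.mem_insert, Finset.mem_singleton] at hs
      rcases hs with rfl | rfl <;> cases h
  | matc hu ha hb =>
      cases h with
      | matchInl v =>
          obtain rfl : v = .star := by simpa using hu
          rw [ha.substD_eq]
          exact ⟨fun t ht => .bool (ha ht), by simp [denote, ha.denoteD_eq]⟩
      | matchInr v =>
          obtain rfl : v = .star := by simpa using hu
          rw [hb.substD_eq]
          exact ⟨fun t ht => .bool (hb ht), by simp [denote, hb.denoteD_eq]⟩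
      | matcC _ _ _ _ h => exact absurd h (not_atom_val _ _)
  | app ha hb ht ih =>
      rw [gate] at h
      cases h with
      | beta _ _ u =>
          cases ht with
          | bool hu =>
              simp only [substD, substT, substV, if_true, ha.substD_eq, hb.substD_eq]
              refine ⟨by simpa [IsCircuitD, domD] using Circuit.matc hu ha hb, ?_⟩
              simp [denoteD, denote_matc hu, denote_app_gate]
      | appR _ h' =>
          refine ⟨fun t ht => ?_, ?_⟩
          · obtain ⟨u, hu, rfl⟩ := mem_domD_appTD ht
            exact .app ha hb ((ih h').1 u hu)
          · rw [← gate, denoteD_appTD_gate, (ih h').2, denote_app_gate]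
      | appL _ h' => exact absurd h' (not_atom_val _ _)

theorem Step.isCircuitD {d d' : Distr} (h : Step d d') (hd : IsCircuitD d) :
    IsCircuitD d' ∧ denoteD d' = denoteD d := by
  obtain ⟨α, s, s', r, h₁, h₂, hat⟩ := h
  have hdom : domD d = {s} ∪ domD r := by simp [h₁.domD_eq, domD]
  obtain ⟨hs', hden⟩ := (hd s (by simp [hdom])).atom hat
  refine ⟨fun t ht => ?_, ?_⟩
  · rw [h₂.domD_eq, domD, Finset.mem_union] at ht
    exact ht.elim (hs' t) (fun ht => hd t (by simp [hdom, ht]))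
  · simp [h₁.denoteD_eq, h₂.denoteD_eq, denoteD, hden]

theorem Eval.isCircuitD {d d' : Distr} (h : Eval d d') (hd : IsCircuitD d) :
    IsCircuitD d' ∧ denoteD d' = denoteD d := by
  induction h with
  | refl => exact ⟨hd, rfl⟩
  | tail _ hs ih =>
      obtain ⟨hc, hden⟩ := hs.isCircuitD ih.1
      exact ⟨hc, hden.trans ih.2⟩

theorem not_realizes_sharpBool {d : Distr} (hd : IsCircuitD d)
    (h₀ : denoteD d = 0) : ¬ Realizes sharpBool d := by
  rintro ⟨v, hv, hev⟩
  obtain ⟨hbool, hnorm⟩ := mem_sharpBool_iff.1 hv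
  have hpi : piB v = 0 := by rw [← hbool.denoteD_eq, (hev.isCircuitD hd).2, h₀]
  simp [hpi] at hnorm

theorem exists_eval_matc {u : Val} (hu : .val u ∈ boolTerms) (x y : ℕ) {a b : Distr}
    (ha : IsBoolD a) (hb : IsBoolD b) :
    ∃ e, Eval (.single (.matc (.val u) x a y b)) e ∧ IsBoolD e ∧
      denoteD e = denote (.matc (.val u) x a y b) := by
  simp only [Finset.mem_insert, Finset.mem_singleton, Term.val.injEq] at hu
  rcases hu with rfl | rfl
  · have hat := Atom.matchInl .star x a y b
    rw [ha.substD_eq] at hat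
    exact ⟨a, .single hat.step, ha, by simp [denote, ha.denoteD_eq]⟩
  · have hat := Atom.matchInr .star x a y b
    rw [hb.substD_eq] at hat
    exact ⟨b, .single hat.step, hb, by simp [denote, hb.denoteD_eq]⟩

theorem exists_eval_of_forall_mem_domD : ∀ {d : Distr},
    (∀ t ∈ domD d, ∃ e, Eval (.single t) e ∧ IsBoolD e ∧ denoteD e = denote t) →
    ∃ e, Eval d e ∧ IsBoolD e ∧ denoteD e = denoteD d
  | .zero, _ => ⟨.zero, .refl, isBoolD_zero, rfl⟩
  | .single t, h => h t (by simp [domD])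
  | .add d₁ d₂, h => by
      obtain ⟨e₁, hev₁, hb₁, hd₁⟩ := exists_eval_of_forall_mem_domD (d := d₁)
        fun t ht => h t (by simp [domD, ht])
      obtain ⟨e₂, hev₂, hb₂, hd₂⟩ := exists_eval_of_forall_mem_domD (d := d₂)
        fun t ht => h t (by simp [domD, ht])
      exact ⟨.add e₁ e₂, hev₁.add hev₂, isBoolD_add_iff.2 ⟨hb₁, hb₂⟩, by simp [denoteD, hd₁, hd₂]⟩
  | .smul a d, h => by
      obtain ⟨e, hev, hb, hd⟩ := exists_eval_of_forall_mem_domD (d := d) h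
      exact ⟨.smul a e, hev.smul a, hb, by simp [denoteD, hd]⟩

theorem IsBoolD.mem_domD_bsubst {x : ℕ} {D : Distr} {t : Term} : ∀ {v : Distr}, IsBoolD v →
    t ∈ domD (bsubst x D v) → ∃ u, .val u ∈ boolTerms ∧ t ∈ domD (substD x u D)
  | .zero, _, ht => by simp [bsubst, domD] at ht
  | .single _, hv, ht => by rcases isBoolD_single_iff.1 hv with rfl | rfl <;> exact ⟨_, by simp, ht⟩
  | .add _ _, hv, ht => by
      simp only [bsubst, domD, Finset.mem_union] at ht
      exact ht.elim (mem_domD_bsubst (isBoolD_add_iff.1 hv).1)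
        (mem_domD_bsubst (isBoolD_add_iff.1 hv).2)
  | .smul _ v, hv, ht => mem_domD_bsubst (v := v) hv ht

theorem IsBoolD.denoteD_bsubst {x : ℕ} {D : Distr} {L : Module.End ℂ (ℂ × ℂ)}
    (hD : ∀ u, .val u ∈ boolTerms → denoteD (substD x u D) = L (denote (.val u))) :
    ∀ {v : Distr}, IsBoolD v → denoteD (bsubst x D v) = L (denoteD v)
  | .zero, _ => by simp [bsubst, denoteD]
  | .single _, hv => by rcases isBoolD_single_iff.1 hv with rfl | rfl <;> exact hD _ (by simp)
  | .add _ _, hv => by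
      simp only [bsubst, denoteD, map_add, denoteD_bsubst hD (isBoolD_add_iff.1 hv).1,
        denoteD_bsubst hD (isBoolD_add_iff.1 hv).2]
  | .smul _ v, hv => by simp only [bsubst, denoteD, map_smul, denoteD_bsubst hD (v := v) hv]

end Gates

section NotGate

noncomputable def sqrtTwo : ℂ := (√2 : ℝ)

theorem sqrtTwo_ne_zero : sqrtTwo ≠ 0 := by simp [sqrtTwo]

theorem normSq_sqrtTwo_inv : Complex.normSq sqrtTwo⁻¹ = 2⁻¹ := by
  simp [sqrtTwo, Complex.normSq_ofReal]

noncomputable def raiseGate : Val := gate .zero (.smul sqrtTwo ttD)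
noncomputable def lowerGate : Val := gate (.smul sqrtTwo ffD) .zero

noncomputable def notGate : Distr :=
  .add (.smul sqrtTwo⁻¹ (.single (.val raiseGate))) (.smul sqrtTwo⁻¹ (.single (.val lowerGate)))

theorem isBoolD_smul_ttD (a : ℂ) : IsBoolD (.smul a ttD) := by simp [ttD]
theorem isBoolD_smul_ffD (a : ℂ) : IsBoolD (.smul a ffD) := by simp [ffD]

theorem gateMap_raise_sq : gateMap .zero (.smul sqrtTwo ttD) ^ 2 = 0 := by
  ext <;> simp [pow_two, piB, coeff, ttD]

theorem gateMap_lower_sq : gateMap (.smul sqrtTwo ffD) .zero ^ 2 = 0 := by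
  ext <;> simp [pow_two, piB, coeff, ffD]

theorem notGate_map_apply (p : ℂ × ℂ) :
    (sqrtTwo⁻¹ • (gateMap .zero (.smul sqrtTwo ttD) + gateMap (.smul sqrtTwo ffD) .zero)) p =
      (p.2, p.1) := by
  simp [piB, coeff, ttD, ffD, mul_left_comm _ _ sqrtTwo, sqrtTwo_ne_zero]

theorem notGate_mem_sphere : notGate ∈ Sphere := by
  have hclosed : fvD notGate = ∅ := by
    simp [notGate, fvD, fvT, fvV, raiseGate, lowerGate, gate, ttD, ffD]
  have hne : Term.val raiseGate ≠ .val lowerGate := by simp [raiseGate, lowerGate, gate]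
  have hraise : coeff notGate (.val raiseGate) = sqrtTwo⁻¹ := by simp [notGate, coeff, hne.symm]
  have hlower : coeff notGate (.val lowerGate) = sqrtTwo⁻¹ := by simp [notGate, coeff, hne]
  refine ⟨⟨⟨trivial, trivial⟩, hclosed⟩, ?_⟩
  rw [normD, innerD, show domD notGate = {.val raiseGate, .val lowerGate} from rfl,
    Finset.sum_pair hne, hraise, hlower, ← Complex.normSq_eq_conj_mul_self, normSq_sqrtTwo_inv]
  norm_num

theorem substD_stripLam_notGate (u : Val) :
    substD 2 u (stripLam 2 notGate) =
      .add (.smul sqrtTwo⁻¹ (.single (.matc (.val u) 3 .zero 4 (.smul sqrtTwo ttD))))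
        (.smul sqrtTwo⁻¹ (.single (.matc (.val u) 3 (.smul sqrtTwo ffD) 4 .zero))) := by
  simp [notGate, raiseGate, lowerGate, gate, stripLam, substD, substT, substV, ttD, ffD]

theorem notGate_mem : notGate ∈ uarrowT sharpBool sharpBool := by
  refine ⟨notGate_mem_sphere, 2, by simp [notGate, domD, raiseGate, lowerGate, gate],
    fun v hv => ?_⟩
  obtain ⟨hvb, hnorm⟩ := mem_sharpBool_iff.1 hv
  obtain ⟨e, hev, he, hde⟩ :=
    exists_eval_of_forall_mem_domD (d := bsubst 2 (stripLam 2 notGate) v) fun t ht => by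
    obtain ⟨u, hu, ht⟩ := hvb.mem_domD_bsubst ht
    simp only [substD_stripLam_notGate, domD, Finset.mem_union, Finset.mem_singleton] at ht
    rcases ht with rfl | rfl
    · exact exists_eval_matc hu _ _ isBoolD_zero (isBoolD_smul_ttD _)
    · exact exists_eval_matc hu _ _ (isBoolD_smul_ffD _) isBoolD_zero
  have hden := hvb.denoteD_bsubst (x := 2) (D := stripLam 2 notGate) (L := sqrtTwo⁻¹ •
      (gateMap .zero (.smul sqrtTwo ttD) + gateMap (.smul sqrtTwo ffD) .zero)) fun u hu => by
    simp [substD_stripLam_notGate, denoteD, denote_matc hu, smul_add]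
  refine ⟨e, mem_sharpBool_iff.2 ⟨he, ?_⟩, hev⟩
  rw [← he.denoteD_eq, hde, hden, hvb.denoteD_eq, notGate_map_apply, add_comm]
  exact hnorm

end NotGate

section Church

theorem iterApp_eq_iterate (n : ℕ) :
    iterApp n = (Term.app (.val (.var 0)))^[n] (.val (.var 1)) := by
  induction n with
  | zero => rfl
  | succ n ih => rw [Function.iterate_succ_apply', ← ih]; rfl

theorem substT_iterate_app (x : ℕ) (u w : Val) (n : ℕ) (t : Term) :
    substT x u ((Term.app (.val w))^[n] t) =
      (Term.app (.val (substV x u w)))^[n] (substT x u t) := by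
  induction n with
  | zero => rfl
  | succ n ih => simp only [Function.iterate_succ_apply', substT, ih]

theorem substV_gate {a b : Distr} (ha : IsBoolD a) (hb : IsBoolD b) (x : ℕ) (w : Val) :
    substV x w (gate a b) = gate a b := by
  by_cases hx : 2 = x <;> simp [gate, substV, substD, substT, hx, ha.substD_eq, hb.substD_eq]

def iterLam (w : Val) (n : ℕ) : Val := .lam 1 (.single ((Term.app (.val w))^[n] (.val (.var 1))))

theorem bsubst_church_notGate (n : ℕ) :
    bsubst 0 (stripLam 0 (church n)) notGate =
      .add (.smul sqrtTwo⁻¹ (.single (.val (iterLam raiseGate n))))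
        (.smul sqrtTwo⁻¹ (.single (.val (iterLam lowerGate n)))) := by
  simp [church, stripLam, notGate, bsubst, substD, substT, substV, iterApp_eq_iterate,
    substT_iterate_app, iterLam]

theorem Circuit.iterate_app {a b : Distr} (ha : IsBoolD a) (hb : IsBoolD b) {t : Term}
    (ht : Circuit t) (n : ℕ) : Circuit ((Term.app (.val (gate a b)))^[n] t) := by
  induction n with
  | zero => exact ht
  | succ n ih => rw [Function.iterate_succ_apply']; exact .app ha hb ih

theorem denote_iterate_app (a b : Distr) (t : Term) (n : ℕ) :
    denote ((Term.app (.val (gate a b)))^[n] t) = (gateMap a b ^ n) (denote t) := by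
  induction n with
  | zero => rfl
  | succ n ih =>
      rw [Function.iterate_succ_apply', denote_app_gate, ih, pow_succ', Module.End.mul_apply]

theorem iterLam_add_not_mem_uarrowT {a₁ b₁ a₂ b₂ : Distr} (ha₁ : IsBoolD a₁) (hb₁ : IsBoolD b₁)
    (ha₂ : IsBoolD a₂) (hb₂ : IsBoolD b₂) (α β : ℂ) {n : ℕ} (h₁ : gateMap a₁ b₁ ^ n = 0)
    (h₂ : gateMap a₂ b₂ ^ n = 0) :
    Distr.add (.smul α (.single (.val (iterLam (gate a₁ b₁) n))))
      (.smul β (.single (.val (iterLam (gate a₂ b₂) n)))) ∉ uarrowT sharpBool sharpBool := by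
  intro h
  have hreal := realizes_of_mem_uarrowT h (x := 1)
    ⟨_, Finset.mem_union_left _ (Finset.mem_singleton_self _)⟩ ttD ttD_mem_sharpBool
  simp only [iterLam, stripLam, if_true, bsubst, ttD, substD, substT_iterate_app,
    substV_gate ha₁ hb₁, substV_gate ha₂ hb₂, substT, substV] at hreal
  refine not_realizes_sharpBool ?_ ?_ hreal
  · simp only [IsCircuitD, domD, Finset.mem_union, Finset.mem_singleton]
    rintro t (rfl | rfl)
    · exact .iterate_app ha₁ hb₁ (.bool (by simp)) n
    · exact .iterate_app ha₂ hb₂ (.bool (by simp)) n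
  · simp [denoteD, denote_iterate_app, h₁, h₂]

theorem normD_add_smul_single (α β : ℂ) (t : Term) :
    normD (.add (.smul α (.single t)) (.smul β (.single t))) = √(Complex.normSq (α + β)) := by
  simp only [normD, innerD, domD, Finset.union_self, Finset.sum_singleton, coeff, if_true,
    mul_one, ← Complex.normSq_eq_conj_mul_self, Complex.ofReal_re]

theorem iterLam_zero_notGate_not_mem_sphere :
    Distr.add (.smul sqrtTwo⁻¹ (.single (.val (iterLam raiseGate 0))))
      (.smul sqrtTwo⁻¹ (.single (.val (iterLam lowerGate 0)))) ∉ Sphere := by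
  rintro ⟨_, hnorm⟩
  rw [show iterLam lowerGate 0 = iterLam raiseGate 0 from rfl, normD_add_smul_single,
    ← two_mul, Complex.normSq_mul, normSq_sqrtTwo_inv] at hnorm
  norm_num at hnorm

end Church

/-- For every n ≠ 1, the Church numeral n̄ does not realize
(♯𝔹⇒♯𝔹)⇒(♯𝔹⇒♯𝔹). -/
theorem church_not_unitary (n : ℕ) (hn : n ≠ 1) :
    ¬ Realizes (uarrowT (uarrowT sharpBool sharpBool)
        (uarrowT sharpBool sharpBool)) (church n) := by
  rw [realizes_iff_mem (by simp [church, domD])]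
  intro h
  have h₁ := realizes_of_mem_uarrowT h (x := 0) ⟨_, Finset.mem_singleton_self _⟩ notGate notGate_mem
  rw [bsubst_church_notGate, realizes_iff_mem (by simp [domD])] at h₁
  obtain _ | _ | k := n
  · exact iterLam_zero_notGate_not_mem_sphere h₁.1
  · exact hn rfl
  · exact iterLam_add_not_mem_uarrowT isBoolD_zero (isBoolD_smul_ttD _) (isBoolD_smul_ffD _)
      isBoolD_zero _ _ (pow_eq_zero_of_le (by omega) gateMap_raise_sq)
      (pow_eq_zero_of_le (by omega) gateMap_lower_sq) h₁

end LinAlg
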